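/- The function Ω : [0,∞) → ℝ defined by Ω(ε) = (π/2)·√(1+ε²)/K(κ(ε)) is strictly increasing on [0,∞). -/
import Mathlib


open Real Set

/-- The modulus κ(ε) = ε/√(2(1+ε²)). -/
noncomputable def kappaMod (ε : ℝ) : ℝ := ε / Real.sqrt (2 * (1 + ε ^ 2))

/-- The complete elliptic integral of the first kind
K(κ) = ∫₀^{π/2} dθ/√(1 - κ² sin²θ). -/
noncomputable def ellipticK (κ : ℝ) : ℝ :=
  ∫ θ in (0:ℝ)..(π / 2), 1 / Real.sqrt (1 - κ ^ 2 * Real.sin θ ^ 2)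

/-- The frequency Ω(ε) = (π/2)·√(1+ε²)/K(κ(ε)) of the single-mode solution. -/
noncomputable def freqOmega (ε : ℝ) : ℝ :=
  (π / 2) * Real.sqrt (1 + ε ^ 2) / ellipticK (kappaMod ε)

noncomputable def ffAux (ε θ : ℝ) : ℝ :=
  1 / Real.sqrt (1 + ε ^ 2 * (1 + Real.cos θ ^ 2) / 2)

lemma ffAux_pos (ε θ : ℝ) : 0 < ffAux ε θ := by
  unfold ffAux; positivity

lemma ffAux_cont (ε : ℝ) : Continuous fun θ => ffAux ε θ := by
  unfold ffAux
  apply Continuous.div continuous_const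
  · exact (by continuity :
      Continuous fun θ => 1 + ε ^ 2 * (1 + Real.cos θ ^ 2) / 2).sqrt
  · intro θ; positivity

lemma ellipticK_eq (ε : ℝ) :
    ellipticK (kappaMod ε)
      = Real.sqrt (1 + ε ^ 2) * ∫ θ in (0:ℝ)..(π / 2), ffAux ε θ := by
  unfold ellipticK
  rw [← intervalIntegral.integral_const_mul]
  apply intervalIntegral.integral_congr
  intro θ _
  have hκ : kappaMod ε ^ 2 = ε ^ 2 / (2 * (1 + ε ^ 2)) := by
    unfold kappaMod
    rw [div_pow, Real.sq_sqrt (by positivity)]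
  have hs : Real.sin θ ^ 2 = 1 - Real.cos θ ^ 2 := by
    nlinarith [Real.sin_sq_add_cos_sq θ]
  have key : 1 - kappaMod ε ^ 2 * Real.sin θ ^ 2
      = (1 + ε ^ 2 * (1 + Real.cos θ ^ 2) / 2) / (1 + ε ^ 2) := by
    rw [hκ, hs]
    have h1 : (1 : ℝ) + ε ^ 2 > 0 := by positivity
    field_simp
    ring
  show 1 / Real.sqrt (1 - kappaMod ε ^ 2 * Real.sin θ ^ 2)
      = Real.sqrt (1 + ε ^ 2) * ffAux ε θ
  rw [key, Real.sqrt_div (by positivity), ffAux]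
  have hA : (0:ℝ) < Real.sqrt (1 + ε ^ 2 * (1 + Real.cos θ ^ 2) / 2) := by positivity
  have hB : (0:ℝ) < Real.sqrt (1 + ε ^ 2) := by positivity
  field_simp

lemma intI_pos (ε : ℝ) : 0 < ∫ θ in (0:ℝ)..(π / 2), ffAux ε θ :=
  intervalIntegral.intervalIntegral_pos_of_pos
    ((ffAux_cont ε).intervalIntegrable _ _) (ffAux_pos ε) (by positivity)

lemma freqOmega_eq (ε : ℝ) :
    freqOmega ε = (π / 2) / ∫ θ in (0:ℝ)..(π / 2), ffAux ε θ := by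
  unfold freqOmega
  rw [ellipticK_eq]
  have h : Real.sqrt (1 + ε ^ 2) > 0 := by positivity
  have hI := intI_pos ε
  field_simp

/-- the frequency Ω(ε) is strictly increasing on [0,∞). -/
theorem freqOmega_strictMonoOn : StrictMonoOn freqOmega (Set.Ici (0 : ℝ)) := by
  intro a ha b hb hab
  have ha' : (0:ℝ) ≤ a := ha
  have hIlt : (∫ θ in (0:ℝ)..(π / 2), ffAux b θ)
      < ∫ θ in (0:ℝ)..(π / 2), ffAux a θ := by
    have hpos : 0 < ∫ θ in (0:ℝ)..(π / 2), (ffAux a θ - ffAux b θ) := by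
      apply intervalIntegral.intervalIntegral_pos_of_pos
      · exact ((ffAux_cont a).sub (ffAux_cont b)).intervalIntegrable _ _
      · intro θ
        have hc : (0:ℝ) ≤ Real.cos θ ^ 2 := sq_nonneg _
        have h1 : (1:ℝ) + a ^ 2 * (1 + Real.cos θ ^ 2) / 2
            < 1 + b ^ 2 * (1 + Real.cos θ ^ 2) / 2 := by
          have hab2 : a ^ 2 < b ^ 2 := by nlinarith
          nlinarith
        have h2 : Real.sqrt (1 + a ^ 2 * (1 + Real.cos θ ^ 2) / 2)
            < Real.sqrt (1 + b ^ 2 * (1 + Real.cos θ ^ 2) / 2) :=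
          Real.sqrt_lt_sqrt (by positivity) h1
        have h3 : (0:ℝ) < Real.sqrt (1 + a ^ 2 * (1 + Real.cos θ ^ 2) / 2) := by positivity
        have := one_div_lt_one_div_of_lt h3 h2
        unfold ffAux
        linarith
      · positivity
    have := intervalIntegral.integral_sub
      ((ffAux_cont a).intervalIntegrable (μ := MeasureTheory.volume) (0:ℝ) (π / 2))
      ((ffAux_cont b).intervalIntegrable (μ := MeasureTheory.volume) (0:ℝ) (π / 2))
    rw [this] at hpos
    linarith
  rw [freqOmega_eq a, freqOmega_eq b]
  exact div_lt_div_of_pos_left (by positivity) (intI_pos b) hIlt
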